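/- In the vortex dipole system, the two vortices never collide: along any solution, the separation satisfies r₁₂(t) > C^{4/Φ} for all t, where C² = (1 - r₁(0)²)^{Ω₀}·(1 - r₂(0)²)^{Ω₀}·r₁₂(0)^{Φ/2} > 0 is determined by the initial conditions. -/

import Mathlib

/-!
Along a solution, `Ω₀ log (1 - ‖z₁‖²) + Ω₀ log (1 - ‖z₂‖²) + Φ log ‖z₁ - z₂‖` is constant. The
rotation terms move each vortex along its circle about the origin, so `‖z₁‖²` and `‖z₂‖²` change
only through the interaction; the interaction terms cancel in `z₁ - z₂`, so `‖z₁ - z₂‖²` changes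
only through the rotation; and the two contributions cancel in the weighted sum.

Since `log (1 - ‖zᵢ‖²) ≤ 0`, with strict inequality at `t = 0` for at least one vortex because
`z₁ 0 ≠ z₂ 0`, the conservation law gives, with `L₀ = Ω₀ log ((1 - r₁(0)²)(1 - r₂(0)²)) < 0`,
`Φ log r₁₂(t) ≥ L₀ + Φ log r₁₂(0) > 2 L₀ + Φ log r₁₂(0) = Φ log C^(4/Φ)`.
-/

open Complex
open scoped ComplexConjugate InnerProductSpace

lemma inner_velocity_left {p q d : ℝ} {a b w : ℂ} (hd : d ≠ 0)
    (h : I * w = -(p : ℂ) * a + (q : ℂ) * (a - b) / (d : ℂ)) :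
    ⟪a, w⟫_ℝ = -(q * (conj a * b).im) / d := by
  obtain rfl : w = -I * (-(p : ℂ) * a + (q : ℂ) * (a - b) / (d : ℂ)) := by
    rw [← h, ← mul_assoc, neg_mul, I_mul_I, neg_neg, one_mul]
  simp only [Complex.inner, mul_re, mul_im, add_re, add_im, sub_re, sub_im, neg_re, neg_im, div_re,
    div_im, conj_re, conj_im, I_re, I_im, ofReal_re, ofReal_im, normSq_ofReal]
  field_simp
  ring

lemma inner_velocity_right {p q d : ℝ} {a b w : ℂ} (hd : d ≠ 0)
    (h : I * w = (p : ℂ) * b - (q : ℂ) * (b - a) / (d : ℂ)) :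
    ⟪b, w⟫_ℝ = -(q * (conj a * b).im) / d := by
  obtain rfl : w = -I * ((p : ℂ) * b - (q : ℂ) * (b - a) / (d : ℂ)) := by
    rw [← h, ← mul_assoc, neg_mul, I_mul_I, neg_neg, one_mul]
  simp only [Complex.inner, mul_re, mul_im, sub_re, sub_im, neg_re, neg_im, div_re, div_im,
    conj_re, conj_im, I_re, I_im, ofReal_re, ofReal_im, normSq_ofReal]
  field_simp
  ring

lemma inner_sub_velocity {p₁ p₂ q d : ℝ} {a b w₁ w₂ : ℂ}
    (h₁ : I * w₁ = -(p₁ : ℂ) * a + (q : ℂ) * (a - b) / (d : ℂ))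
    (h₂ : I * w₂ = (p₂ : ℂ) * b - (q : ℂ) * (b - a) / (d : ℂ)) :
    ⟪a - b, w₁ - w₂⟫_ℝ = -((p₁ + p₂) * (conj a * b).im) := by
  have hrot : w₁ - w₂ = -I * (I * w₁ - I * w₂) := by
    rw [← mul_sub, ← mul_assoc, neg_mul, I_mul_I, neg_neg, one_mul]
  rw [hrot, h₁, h₂]
  simp only [Complex.inner, mul_re, mul_im, add_re, add_im, sub_re, sub_im, neg_re, neg_im, div_re,
    div_im, conj_re, conj_im, I_re, I_im, ofReal_re, ofReal_im, normSq_ofReal]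
  ring

lemma one_sub_sq_norm_pos {z : ℂ} (hz : ‖z‖ < 1) : 0 < 1 - ‖z‖ ^ 2 := by
  nlinarith [norm_nonneg z]

lemma log_one_sub_sq_norm_nonpos {z : ℂ} (hz : ‖z‖ < 1) : Real.log (1 - ‖z‖ ^ 2) ≤ 0 :=
  Real.log_nonpos (one_sub_sq_norm_pos hz).le (by nlinarith [norm_nonneg z])

lemma log_one_sub_sq_norm_neg {z : ℂ} (hz : ‖z‖ < 1) (hz₀ : z ≠ 0) :
    Real.log (1 - ‖z‖ ^ 2) < 0 :=
  Real.log_neg (one_sub_sq_norm_pos hz) (by have := norm_pos_iff.2 hz₀; nlinarith)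

noncomputable def dipoleLogInvariant (Ω₀ Φ : ℝ) (a b : ℂ) : ℝ :=
  Ω₀ * Real.log (1 - ‖a‖ ^ 2) + Ω₀ * Real.log (1 - ‖b‖ ^ 2) + Φ / 2 * Real.log (‖a - b‖ ^ 2)

noncomputable def dipoleConstSq (Ω₀ Φ : ℝ) (a b : ℂ) : ℝ :=
  (1 - ‖a‖ ^ 2) ^ Ω₀ * (1 - ‖b‖ ^ 2) ^ Ω₀ * ‖a - b‖ ^ (Φ / 2)

lemma hasDerivAt_dipoleLogInvariant {Ω₀ Φ t : ℝ} {z₁ z₂ : ℝ → ℂ} {w₁ w₂ : ℂ}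
    (hz₁ : ‖z₁ t‖ < 1) (hz₂ : ‖z₂ t‖ < 1) (hsep : z₁ t ≠ z₂ t)
    (hw₁ : HasDerivAt z₁ w₁ t) (hw₂ : HasDerivAt z₂ w₂ t)
    (he₁ : I * w₁ = -((Ω₀ / (1 - ‖z₁ t‖ ^ 2) : ℝ) : ℂ) * z₁ t
          + ((Φ / 2 : ℝ) : ℂ) * (z₁ t - z₂ t) / ((‖z₁ t - z₂ t‖ ^ 2 : ℝ) : ℂ))
    (he₂ : I * w₂ = ((Ω₀ / (1 - ‖z₂ t‖ ^ 2) : ℝ) : ℂ) * z₂ t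
          - ((Φ / 2 : ℝ) : ℂ) * (z₂ t - z₁ t) / ((‖z₁ t - z₂ t‖ ^ 2 : ℝ) : ℂ)) :
    HasDerivAt (fun s ↦ dipoleLogInvariant Ω₀ Φ (z₁ s) (z₂ s)) 0 t := by
  have hA₁ := one_sub_sq_norm_pos hz₁
  have hA₂ := one_sub_sq_norm_pos hz₂
  have hd : 0 < ‖z₁ t - z₂ t‖ ^ 2 := by
    have := norm_pos_iff.2 (sub_ne_zero.2 hsep)
    positivity
  have hderiv := (((hw₁.norm_sq.const_sub 1).log hA₁.ne').const_mul Ω₀).add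
    (((hw₂.norm_sq.const_sub 1).log hA₂.ne').const_mul Ω₀) |>.add
    (((hw₁.sub hw₂).norm_sq.log hd.ne').const_mul (Φ / 2))
  refine hderiv.congr_deriv ?_
  rw [Pi.sub_apply, inner_velocity_left hd.ne' he₁, inner_velocity_right hd.ne' he₂,
    inner_sub_velocity he₁ he₂]
  field_simp
  ring

section

variable {Ω₀ Φ : ℝ} {a b : ℂ}

lemma dipoleConstSq_pos (ha : ‖a‖ < 1) (hb : ‖b‖ < 1) (hab : a ≠ b) :
    0 < dipoleConstSq Ω₀ Φ a b := by
  have hr := norm_pos_iff.2 (sub_ne_zero.2 hab)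
  unfold dipoleConstSq
  exact mul_pos (mul_pos (Real.rpow_pos_of_pos (one_sub_sq_norm_pos ha) _)
    (Real.rpow_pos_of_pos (one_sub_sq_norm_pos hb) _)) (Real.rpow_pos_of_pos hr _)

lemma log_dipoleConstSq (ha : ‖a‖ < 1) (hb : ‖b‖ < 1) (hab : a ≠ b) :
    Real.log (dipoleConstSq Ω₀ Φ a b) = Ω₀ * Real.log (1 - ‖a‖ ^ 2)
      + Ω₀ * Real.log (1 - ‖b‖ ^ 2) + Φ / 2 * Real.log ‖a - b‖ := by
  have hr := norm_pos_iff.2 (sub_ne_zero.2 hab)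
  have hA := Real.rpow_pos_of_pos (one_sub_sq_norm_pos ha) Ω₀
  have hB := Real.rpow_pos_of_pos (one_sub_sq_norm_pos hb) Ω₀
  unfold dipoleConstSq
  rw [Real.log_mul (by positivity) (by positivity), Real.log_mul hA.ne' hB.ne',
    Real.log_rpow (one_sub_sq_norm_pos ha), Real.log_rpow (one_sub_sq_norm_pos hb),
    Real.log_rpow hr]

end

lemma lt_norm_sub_of_dipoleLogInvariant_eq {Ω₀ Φ : ℝ} (hΩ₀ : 0 < Ω₀) (hΦ : 0 < Φ)
    {a b a₀ b₀ : ℂ} (ha : ‖a‖ < 1) (hb : ‖b‖ < 1) (hab : a ≠ b)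
    (ha₀ : ‖a₀‖ < 1) (hb₀ : ‖b₀‖ < 1) (hab₀ : a₀ ≠ b₀)
    (h : dipoleLogInvariant Ω₀ Φ a b = dipoleLogInvariant Ω₀ Φ a₀ b₀) :
    √(dipoleConstSq Ω₀ Φ a₀ b₀) ^ (4 / Φ) < ‖a - b‖ := by
  set L₀ := Ω₀ * Real.log (1 - ‖a₀‖ ^ 2) + Ω₀ * Real.log (1 - ‖b₀‖ ^ 2)
  have hL₀ : L₀ < 0 := by
    have h₁ := log_one_sub_sq_norm_nonpos ha₀
    have h₂ := log_one_sub_sq_norm_nonpos hb₀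
    obtain h₀ | h₀ : a₀ ≠ 0 ∨ b₀ ≠ 0 := by
      by_contra! h
      exact hab₀ (h.1.trans h.2.symm)
    · nlinarith [log_one_sub_sq_norm_neg ha₀ h₀]
    · nlinarith [log_one_sub_sq_norm_neg hb₀ h₀]
  have hr := norm_pos_iff.2 (sub_ne_zero.2 hab)
  have hC := dipoleConstSq_pos (Ω₀ := Ω₀) (Φ := Φ) ha₀ hb₀ hab₀
  have hlogC : Real.log (√(dipoleConstSq Ω₀ Φ a₀ b₀) ^ (4 / Φ))
      = (2 * L₀ + Φ * Real.log ‖a₀ - b₀‖) / Φ := by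
    rw [Real.log_rpow (Real.sqrt_pos.2 hC), Real.log_sqrt hC.le, log_dipoleConstSq ha₀ hb₀ hab₀]
    field_simp
    ring
  have hlogr : L₀ + Φ * Real.log ‖a₀ - b₀‖ ≤ Φ * Real.log ‖a - b‖ := by
    unfold dipoleLogInvariant at h
    simp only [Real.log_pow] at h
    nlinarith [log_one_sub_sq_norm_nonpos ha, log_one_sub_sq_norm_nonpos hb]
  rw [← Real.log_lt_log_iff (by positivity) hr, hlogC, div_lt_iff₀ hΦ]
  linarith

theorem dipole_no_collision
    (Ω₀ Φ : ℝ) (hΩ₀ : 0 < Ω₀) (hΦ : 0 < Φ)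
    (z₁ z₂ : ℝ → ℂ)
    (hdisk : ∀ t, ‖z₁ t‖ < 1 ∧ ‖z₂ t‖ < 1)
    (hsep : ∀ t, z₁ t ≠ z₂ t)
    (hdyn1 : ∀ t, ∃ w : ℂ, HasDerivAt z₁ w t ∧
      Complex.I * w
        = -((Ω₀ / (1 - ‖z₁ t‖ ^ 2) : ℝ) : ℂ) * z₁ t
          + ((Φ / 2 : ℝ) : ℂ) * (z₁ t - z₂ t) / ((‖z₁ t - z₂ t‖ ^ 2 : ℝ) : ℂ))
    (hdyn2 : ∀ t, ∃ w : ℂ, HasDerivAt z₂ w t ∧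
      Complex.I * w
        = ((Ω₀ / (1 - ‖z₂ t‖ ^ 2) : ℝ) : ℂ) * z₂ t
          - ((Φ / 2 : ℝ) : ℂ) * (z₂ t - z₁ t) / ((‖z₁ t - z₂ t‖ ^ 2 : ℝ) : ℂ)) :
    0 < (1 - ‖z₁ 0‖ ^ 2) ^ Ω₀ * (1 - ‖z₂ 0‖ ^ 2) ^ Ω₀ * ‖z₁ 0 - z₂ 0‖ ^ (Φ / 2) ∧
    ∀ t : ℝ, ‖z₁ t - z₂ t‖ >
      (Real.sqrt ((1 - ‖z₁ 0‖ ^ 2) ^ Ω₀ * (1 - ‖z₂ 0‖ ^ 2) ^ Ω₀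
        * ‖z₁ 0 - z₂ 0‖ ^ (Φ / 2))) ^ (4 / Φ) := by
  have hinv (t : ℝ) : HasDerivAt (fun s ↦ dipoleLogInvariant Ω₀ Φ (z₁ s) (z₂ s)) 0 t := by
    obtain ⟨w₁, hw₁, he₁⟩ := hdyn1 t
    obtain ⟨w₂, hw₂, he₂⟩ := hdyn2 t
    exact hasDerivAt_dipoleLogInvariant (hdisk t).1 (hdisk t).2 (hsep t) hw₁ hw₂ he₁ he₂
  have hconst (t : ℝ) : dipoleLogInvariant Ω₀ Φ (z₁ t) (z₂ t)
      = dipoleLogInvariant Ω₀ Φ (z₁ 0) (z₂ 0) :=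
    is_const_of_deriv_eq_zero (fun s ↦ (hinv s).differentiableAt) (fun s ↦ (hinv s).deriv) t 0
  refine ⟨dipoleConstSq_pos (hdisk 0).1 (hdisk 0).2 (hsep 0), fun t ↦ ?_⟩
  exact lt_norm_sub_of_dipoleLogInvariant_eq hΩ₀ hΦ (hdisk t).1 (hdisk t).2 (hsep t)
    (hdisk 0).1 (hdisk 0).2 (hsep 0) (hconst t)
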